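/- arXiv:math/0211462 — 5 statements merged into one kernel-verified Lean document; each statement's English description precedes it below -/
import Mathlib

section
/- For each n ≥ 1, define complex coordinates z_1,...,z_n with Poisson brackets {z_k,z_ℓ} = z_k z_ℓ for k ≤ ℓ, {z_k,z_ℓ*} = z_k z_ℓ* for k ≠ ℓ, and {z_k,z_k*} = 2(1 + Σ_{ℓ≤k} z_ℓ z_ℓ*). Let S^{(n)} be the 2n×2n antisymmetric matrix with entries S_{ij} = {w_i,w_j} where w_{2k-1} = z_k, w_{2k} = z_k*. Then the Pfaffian satisfies the recursion Pf(S^{(n)}) = 2·Pf(S^{(n-1)})·(1 + Σ_{ℓ≤n} |z_ℓ|²), and hence Pf(S^{(n)}) = 2^n · Π_{k=1}^n (1 + Σ_{ℓ≤k} |z_ℓ|²) ≠ 0. -/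
open Finset

/-- The Pfaffian of a `2n × 2n` matrix, via the standard closed formula
`Pf(A) = (2^n n!)⁻¹ ∑_{σ ∈ S_{2n}} sgn σ ∏_k A_{σ(2k) σ(2k+1)}`. -/
noncomputable def pfaffian (n : ℕ) (A : Matrix (Fin (2 * n)) (Fin (2 * n)) ℂ) : ℂ :=
  ((2 : ℂ) ^ n * (n.factorial : ℂ))⁻¹ *
    ∑ σ : Equiv.Perm (Fin (2 * n)),
      ((Equiv.Perm.sign σ : ℤ) : ℂ) *
        ∏ k : Fin n,
          A (σ ⟨2 * k, by have := k.isLt; omega⟩) (σ ⟨2 * k + 1, by have := k.isLt; omega⟩)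

/-- `w` is the interleaved coordinate list: `w_{2k} = z_k`, `w_{2k+1} = z_k*` (0-indexed). -/
noncomputable def wCoord (z : ℕ → ℂ) (i : ℕ) : ℂ :=
  if i % 2 = 0 then z (i / 2) else starRingEnd ℂ (z (i / 2))

/-- The Poisson bracket `{w_i, w_j}` for `i < j`:
if `w_i, w_j` come from the same `z_k` it is `{z_k, z_k*} = 2(1 + ∑_{ℓ≤k} z_ℓ z_ℓ*)`;
otherwise (indices `a < b`) all brackets `{z_a, z_b}, {z_a, z_b*}, {z_a*, z_b}, {z_a*, z_b*}`
equal the product `w_i w_j`. -/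
noncomputable def wBracket (z : ℕ → ℂ) (i j : ℕ) : ℂ :=
  if i / 2 = j / 2 then
    2 * (1 + ∑ ℓ ∈ Finset.range (i / 2 + 1), z ℓ * starRingEnd ℂ (z ℓ))
  else wCoord z i * wCoord z j

/-- The antisymmetric matrix `S^{(n)}` with `S_{ij} = {w_i, w_j}`. -/
noncomputable def Spn (n : ℕ) (z : ℕ → ℂ) : Matrix (Fin (2 * n)) (Fin (2 * n)) ℂ :=
  fun i j =>
    if (i : ℕ) < (j : ℕ) then wBracket z i j
    else if (j : ℕ) < (i : ℕ) then - wBracket z j i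
    else 0

/-!
Index `Fin (2n)` by `Fin n × Fin 2`, block `k` holding `w_{2k} = z_k` and `w_{2k+1} = z_k*`.
Away from the diagonal blocks `S_{ij} = ± w_i w_j`, with a sign that depends only on the blocks
of `i` and `j`; hence the two rows of a block are proportional outside that block. For any
antisymmetric matrix with this property the Pfaffian is the product of the diagonal block entries
`S_{2k,2k+1} = 2 (1 + ∑_{ℓ ≤ k} |z_ℓ|²)`. In the permutation expansion, each of the `2ⁿ n!`
permutations commuting with the involution `(k, e) ↦ (k, 1 - e)` contributes exactly this product.
The other terms cancel in pairs: if block `b` is not matched to itself, exchanging the partners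
of its two entries flips the sign and, by the proportionality, keeps the product. The recursion
and the closed formula follow, and every factor is a positive real.
-/

open Equiv Equiv.Perm

lemma Equiv.Perm.eq_one_or_eq_swap_of_fin_two (τ : Perm (Fin 2)) : τ = 1 ∨ τ = swap 0 1 := by
  revert τ
  decide

lemma Equiv.Perm.commute_swap_zero_one_of_fin_two (τ : Perm (Fin 2)) : Commute τ (swap 0 1) := by
  rcases τ.eq_one_or_eq_swap_of_fin_two with rfl | rfl
  exacts [Commute.one_left _, Commute.refl _]

lemma Equiv.Perm.sign_mul_apply_zero_apply_one_of_fin_two {R : Type*} [CommRing R]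
    (τ : Perm (Fin 2)) {M : Fin 2 → Fin 2 → R} (hM : M 1 0 = -M 0 1) :
    ((sign τ : ℤ) : R) * M (τ 0) (τ 1) = M 0 1 := by
  rcases τ.eq_one_or_eq_swap_of_fin_two with rfl | rfl <;> simp [hM]

lemma Equiv.swap_mul_mul_swap_apply_of_apply_eq {α : Type*} [DecidableEq α] {r : Perm α}
    {j j' x y : α} (hxy : r x = y) (hyx : r y = x) (hjx : r j ≠ x) (hjy : r j ≠ y)
    (hj'x : r j' ≠ x) (hj'y : r j' ≠ y) : (swap j j' * r * swap j j') x = y := by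
  have hx : x ≠ j ∧ x ≠ j' := ⟨by rintro rfl; exact hjy hxy, by rintro rfl; exact hj'y hxy⟩
  have hy : y ≠ j ∧ y ≠ j' := ⟨by rintro rfl; exact hjx hyx, by rintro rfl; exact hj'x hyx⟩
  simp [swap_apply_of_ne_of_ne hx.1 hx.2, hxy, swap_apply_of_ne_of_ne hy.1 hy.2]

lemma Fintype.prod_eq_prod_of_eq_off_pair {ι M : Type*} [Fintype ι] [DecidableEq ι]
    [CommMonoid M] {f g : ι → M} {a a' : ι} (ha : a ≠ a')
    (hfg : ∀ k, k ≠ a → k ≠ a' → f k = g k) (hpair : f a * f a' = g a * g a') :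
    ∏ k, f k = ∏ k, g k := by
  rw [← Finset.prod_mul_prod_compl {a, a'} f, ← Finset.prod_mul_prod_compl {a, a'} g,
    Finset.prod_pair ha, Finset.prod_pair ha, hpair]
  congr 1
  refine Finset.prod_congr rfl fun k hk => ?_
  simp only [Finset.mem_compl, Finset.mem_insert, Finset.mem_singleton, not_or] at hk
  exact hfg k hk.1 hk.2

namespace PairedBlocks

variable {β : Type*}

def pairSwap : Perm (β × Fin 2) := prodCongrRight fun _ => swap 0 1

@[simp] lemma pairSwap_apply (x : β × Fin 2) : pairSwap x = (x.1, swap 0 1 x.2) := rfl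

@[simp] lemma pairSwap_pairSwap (x : β × Fin 2) : pairSwap (pairSwap x) = x := by
  simp

lemma pairSwap_apply_ne (x : β × Fin 2) : pairSwap x ≠ x := by
  obtain ⟨b, e⟩ := x
  fin_cases e <;> simp [Prod.ext_iff]

lemma eq_or_eq_pairSwap_of_fst_eq {x y : β × Fin 2} (h : y.1 = x.1) :
    y = x ∨ y = pairSwap x := by
  obtain ⟨b, e⟩ := x
  obtain ⟨c, e'⟩ := y
  obtain rfl : c = b := h
  fin_cases e <;> fin_cases e' <;> simp

lemma fst_apply_eq_of_commute {σ : Perm (β × Fin 2)} (hσ : Commute σ pairSwap)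
    {x y : β × Fin 2} (hxy : x.1 = y.1) : (σ x).1 = (σ y).1 := by
  rcases eq_or_eq_pairSwap_of_fst_eq hxy with rfl | rfl
  · rfl
  · rw [← Perm.mul_apply, hσ.eq, Perm.mul_apply, pairSwap_apply]

lemma commute_prodShear_pairSwap (π : Perm β) (τ : β → Perm (Fin 2)) :
    Commute (prodShear π τ : Perm (β × Fin 2)) pairSwap := by
  ext x : 1
  have h := DFunLike.congr_fun (τ x.1).commute_swap_zero_one_of_fin_two.eq x.2
  simp only [Perm.mul_apply] at h
  simp [h]

lemma exists_prodShear_eq_of_commute [Finite β] {σ : Perm (β × Fin 2)}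
    (hσ : Commute σ pairSwap) : ∃ π τ, prodShear π τ = σ := by
  have hπ : Function.Injective fun b => (σ (b, 0)).1 := fun b b' h => by
    simpa using fst_apply_eq_of_commute hσ.inv_left h
  have hτ (b : β) : Function.Injective fun e => (σ (b, e)).2 := fun e e' h => by
    simpa using σ.injective
      (Prod.ext (fst_apply_eq_of_commute hσ (x := (b, e)) (y := (b, e')) rfl) h)
  refine ⟨.ofBijective _ (Finite.injective_iff_bijective.mp hπ),
    fun b => .ofBijective _ (Finite.injective_iff_bijective.mp (hτ b)), ?_⟩
  ext x : 1
  exact Prod.ext (fst_apply_eq_of_commute hσ rfl) rfl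

/-- `σ` pairs `σ (k, 0)` with `σ (k, 1)`; `partner σ` is this fixed-point-free involution. -/
def partner (σ : Perm (β × Fin 2)) : Perm (β × Fin 2) := σ * pairSwap * σ⁻¹

lemma partner_apply_apply (σ : Perm (β × Fin 2)) (x : β × Fin 2) :
    partner σ (σ x) = σ (pairSwap x) := by
  simp [partner]

lemma partner_partner (σ : Perm (β × Fin 2)) (x : β × Fin 2) :
    partner σ (partner σ x) = x := by
  obtain ⟨y, rfl⟩ := σ.surjective x
  rw [partner_apply_apply, partner_apply_apply, pairSwap_pairSwap]

lemma partner_apply_ne (σ : Perm (β × Fin 2)) (x : β × Fin 2) : partner σ x ≠ x := by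
  obtain ⟨y, rfl⟩ := σ.surjective x
  rw [partner_apply_apply, Ne, σ.injective.eq_iff]
  exact pairSwap_apply_ne y

lemma partner_mul (s σ : Perm (β × Fin 2)) : partner (s * σ) = s * partner σ * s⁻¹ := by
  simp only [partner, mul_inv_rev, mul_assoc]

/-- The two rows of each diagonal block are proportional outside that block. -/
def OffBlockRankOne {R : Type*} [CommRing R] (A : Matrix (β × Fin 2) (β × Fin 2) R) : Prop :=
  ∀ i i' j j', i.1 = i'.1 → j.1 ≠ i.1 → j'.1 ≠ i.1 → A i j * A i' j' = A i j' * A i' j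

lemma apply_zero_apply_one_eq {R : Type*} [CommRing R] {A : Matrix (β × Fin 2) (β × Fin 2) R}
    (hA : ∀ i j, A j i = -A i j) (τ : Perm (β × Fin 2)) (x : β × Fin 2) :
    A (τ (x.1, 0)) (τ (x.1, 1)) = (if x.2 = 0 then 1 else -1) * A (τ x) (τ (pairSwap x)) := by
  obtain ⟨k, e⟩ := x
  fin_cases e
  · simp
  · simp [hA (τ (k, 1))]

variable [DecidableEq β]

def rematch (σ : Perm (β × Fin 2)) (b : β) : Perm (β × Fin 2) :=
  swap (partner σ (b, 0)) (partner σ (b, 1)) * σ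

lemma rematch_ne (σ : Perm (β × Fin 2)) (b : β) : rematch σ b ≠ σ := by
  rw [rematch, Ne, mul_eq_right, swap_eq_one_iff, (partner σ).injective.eq_iff]
  simp

variable [Fintype β]

def unpairedBlocks (σ : Perm (β × Fin 2)) : Finset β :=
  {b | partner σ (b, 0) ≠ (b, 1)}

lemma unpairedBlocks_nonempty_iff {σ : Perm (β × Fin 2)} :
    (unpairedBlocks σ).Nonempty ↔ ¬Commute σ pairSwap := by
  rw [nonempty_iff_ne_empty, Ne, not_iff_not]
  have hpartner : partner σ = pairSwap ↔ Commute σ pairSwap := mul_inv_eq_iff_eq_mul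
  rw [← hpartner, unpairedBlocks, filter_eq_empty_iff]
  simp only [mem_univ, true_implies, not_not]
  refine ⟨fun h => Equiv.ext fun ⟨b, e⟩ => ?_, fun h b => by simp [h]⟩
  fin_cases e
  · simpa using @h b
  · simpa [@h b] using partner_partner σ (b, 0)

section rematch

variable {σ : Perm (β × Fin 2)} {b : β} (hb : b ∈ unpairedBlocks σ)
include hb

lemma fst_partner_ne (e : Fin 2) : (partner σ (b, e)).1 ≠ b := by
  have hb' : partner σ (b, 0) ≠ (b, 1) := by simpa [unpairedBlocks] using hb
  intro h
  rcases eq_or_eq_pairSwap_of_fst_eq (x := (b, e)) h with h | h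
  · exact partner_apply_ne σ _ h
  · fin_cases e
    · exact hb' (by simpa using h)
    · have h1 : partner σ (b, 1) = (b, 0) := by simpa using h
      exact hb' (by rw [← h1, partner_partner])

lemma swap_partner_apply (e : Fin 2) :
    swap (partner σ (b, 0)) (partner σ (b, 1)) (b, e) = (b, e) :=
  swap_apply_of_ne_of_ne (fun h => fst_partner_ne hb 0 (congrArg Prod.fst h).symm)
    (fun h => fst_partner_ne hb 1 (congrArg Prod.fst h).symm)

lemma partner_rematch_apply (e : Fin 2) :
    partner (rematch σ b) (b, e) = partner σ (b, swap 0 1 e) := by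
  rw [rematch, partner_mul, swap_inv, Perm.mul_apply, Perm.mul_apply, swap_partner_apply hb]
  fin_cases e <;> simp

lemma rematch_rematch : rematch (rematch σ b) b = σ := by
  rw [rematch, partner_rematch_apply hb, partner_rematch_apply hb, rematch, ← mul_assoc]
  simp [swap_comm]

lemma unpairedBlocks_rematch : unpairedBlocks (rematch σ b) = unpairedBlocks σ := by
  set s := swap (partner σ (b, 0)) (partner σ (b, 1))
  have hconj : partner (rematch σ b) = s * partner σ * s := by
    rw [rematch, partner_mul, swap_inv]
  have hconj' : partner σ = s * partner (rematch σ b) * s := by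
    rw [hconj]; simp [s, mul_assoc]
  have hback (e : Fin 2) : partner (rematch σ b) (partner σ (b, e)) = (b, swap 0 1 e) := by
    rw [← partner_partner (rematch σ b) (b, swap 0 1 e), partner_rematch_apply hb]
    simp
  ext c
  simp only [unpairedBlocks, mem_filter, mem_univ, true_and, ne_eq, not_iff_not]
  by_cases hc : c = b
  · subst hc
    rw [partner_rematch_apply hb]
    exact iff_of_false (partner_apply_ne σ _) (by simpa [unpairedBlocks] using hb)
  have hblock (e e' : Fin 2) : ((b, e) : β × Fin 2) ≠ (c, e') := by simp [Ne.symm hc]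
  constructor
  · intro h
    rw [hconj']
    exact swap_mul_mul_swap_apply_of_apply_eq h (by rw [← h, partner_partner])
      (by rw [hback]; apply hblock) (by rw [hback]; apply hblock)
      (by rw [hback]; apply hblock) (by rw [hback]; apply hblock)
  · intro h
    rw [hconj]
    exact swap_mul_mul_swap_apply_of_apply_eq h (by rw [← h, partner_partner])
      (by rw [partner_partner]; apply hblock) (by rw [partner_partner]; apply hblock)
      (by rw [partner_partner]; apply hblock) (by rw [partner_partner]; apply hblock)

end rematch

variable {R : Type*} [CommRing R] {A : Matrix (β × Fin 2) (β × Fin 2) R}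

def pfaffianTerm (A : Matrix (β × Fin 2) (β × Fin 2) R) (σ : Perm (β × Fin 2)) : R :=
  ((sign σ : ℤ) : R) * ∏ k, A (σ (k, 0)) (σ (k, 1))

lemma sign_prodShear (π : Perm β) (τ : β → Perm (Fin 2)) :
    sign (prodShear π τ : Perm (β × Fin 2)) = ∏ k, sign (τ k) := by
  have : (prodShear π τ : Perm (β × Fin 2)) = prodCongrLeft (fun _ => π) * prodCongrRight τ := by
    ext x <;> rfl
  rw [this, Perm.sign_mul, sign_prodCongrLeft, sign_prodCongrRight, Fin.prod_univ_two,
    Int.units_mul_self, one_mul]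

lemma pfaffianTerm_prodShear (hA : ∀ i j, A j i = -A i j) (π : Perm β)
    (τ : β → Perm (Fin 2)) : pfaffianTerm A (prodShear π τ) = ∏ k, A (k, 0) (k, 1) := calc
  pfaffianTerm A (prodShear π τ)
      = ∏ k, ((sign (τ k) : ℤ) : R) * A (π k, τ k 0) (π k, τ k 1) := by
    simp [pfaffianTerm, sign_prodShear, prod_mul_distrib]
  _ = ∏ k, A (π k, 0) (π k, 1) :=
    prod_congr rfl fun k _ => (τ k).sign_mul_apply_zero_apply_one_of_fin_two
      (M := fun e e' => A (π k, e) (π k, e')) (hA _ _)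
  _ = ∏ k, A (k, 0) (k, 1) := Equiv.prod_comp π fun k => A (k, 0) (k, 1)

lemma pfaffianTerm_rematch (hA : ∀ i j, A j i = -A i j) (hrank : OffBlockRankOne A)
    {σ : Perm (β × Fin 2)} {b : β} (hb : b ∈ unpairedBlocks σ) :
    pfaffianTerm A (rematch σ b) = -pfaffianTerm A σ := by
  set j := partner σ (b, 0)
  set j' := partner σ (b, 1)
  have hjj' : j ≠ j' := (partner σ).injective.ne (by simp)
  have hrematch (x : β × Fin 2) : rematch σ b x = swap j j' (σ x) := rfl
  obtain ⟨u, hu⟩ := σ.surjective j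
  obtain ⟨u', hu'⟩ := σ.surjective j'
  have hfu : σ (pairSwap u) = (b, 0) := by rw [← partner_apply_apply, hu, partner_partner]
  have hfu' : σ (pairSwap u') = (b, 1) := by rw [← partner_apply_apply, hu', partner_partner]
  have hk : u.1 ≠ u'.1 := by
    intro h
    rcases eq_or_eq_pairSwap_of_fst_eq h.symm with h | h
    · exact hjj' (by rw [← hu, ← hu', h])
    · exact fst_partner_ne hb 1 (congrArg Prod.fst (show j' = (b, 0) by rw [← hu', h, hfu]))
  -- only the slots `u.1` and `u'.1` change, and their product is preserved
  have hprod : ∏ k, A (rematch σ b (k, 0)) (rematch σ b (k, 1))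
      = ∏ k, A (σ (k, 0)) (σ (k, 1)) := by
    refine Fintype.prod_eq_prod_of_eq_off_pair hk (fun k hk1 hk2 => ?_) ?_
    · have hfix (e : Fin 2) : swap j j' (σ (k, e)) = σ (k, e) :=
        swap_apply_of_ne_of_ne (fun h => hk1 (by rw [← σ.injective (h.trans hu.symm)]))
          (fun h => hk2 (by rw [← σ.injective (h.trans hu'.symm)]))
      simp only [hrematch, hfix]
    · rw [apply_zero_apply_one_eq hA _ u, apply_zero_apply_one_eq hA _ u',
        apply_zero_apply_one_eq hA σ u, apply_zero_apply_one_eq hA σ u']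
      have hfixb (e : Fin 2) : swap j j' (b, e) = (b, e) := swap_partner_apply hb e
      simp only [hrematch, hu, hfu, hu', hfu', swap_apply_left, swap_apply_right, hfixb]
      have := hrank (b, 0) (b, 1) j j' rfl (fst_partner_ne hb 0) (fst_partner_ne hb 1)
      rw [hA (b, 0) j, hA (b, 0) j', hA (b, 1) j, hA (b, 1) j']
      linear_combination -(if u.2 = 0 then 1 else -1) * (if u'.2 = 0 then 1 else -1) * this
  rw [pfaffianTerm, pfaffianTerm, hprod, rematch, Perm.sign_mul, sign_swap hjj']
  push_cast
  ring

instance : DecidablePred fun σ : Perm (β × Fin 2) => Commute σ pairSwap :=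
  fun σ => inferInstanceAs (Decidable (σ * pairSwap = pairSwap * σ))

lemma sum_pfaffianTerm_commute (hA : ∀ i j, A j i = -A i j) :
    ∑ σ with Commute σ pairSwap, pfaffianTerm A σ
      = (Fintype.card β).factorial * 2 ^ Fintype.card β * ∏ k, A (k, 0) (k, 1) := by
  have himage : ({σ | Commute σ pairSwap} : Finset (Perm (β × Fin 2)))
      = univ.image fun p : Perm β × (β → Perm (Fin 2)) => prodShear p.1 p.2 := by
    ext σ
    simp only [mem_filter, mem_univ, true_and, mem_image, Prod.exists]
    exact ⟨exists_prodShear_eq_of_commute, fun ⟨π, τ, h⟩ => h ▸ commute_prodShear_pairSwap π τ⟩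
  have hinj : Function.Injective fun p : Perm β × (β → Perm (Fin 2)) => prodShear p.1 p.2 := by
    rintro ⟨π, τ⟩ ⟨π', τ'⟩ h
    have h' (x : β × Fin 2) := congrArg (· x) h
    simp only [prodShear_apply, Prod.ext_iff] at h'
    exact Prod.ext (Equiv.ext fun b => (h' (b, 0)).1)
      (funext fun b => Equiv.ext fun e => (h' (b, e)).2)
  rw [himage, sum_image hinj.injOn]
  simp [pfaffianTerm_prodShear hA, Fintype.card_perm]

lemma sum_pfaffianTerm_not_commute (hA : ∀ i j, A j i = -A i j) (hrank : OffBlockRankOne A) :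
    ∑ σ with ¬Commute σ pairSwap, pfaffianTerm A σ = 0 := by
  have hne {σ} (hσ : σ ∈ ({σ | ¬Commute σ pairSwap} : Finset (Perm (β × Fin 2)))) :
      (unpairedBlocks σ).Nonempty :=
    unpairedBlocks_nonempty_iff.mpr (mem_filter.mp hσ).2
  have hchoose {s t : Finset β} (hs : s.Nonempty) (ht : t.Nonempty) (h : s = t) :
      hs.choose = ht.choose := by
    subst h; rfl
  refine sum_involution (fun σ hσ => rematch σ (hne hσ).choose)
    (fun σ hσ => ?_) (fun σ _ _ => rematch_ne _ _) (fun σ hσ => ?_) (fun σ hσ => ?_)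
  · rw [pfaffianTerm_rematch hA hrank (hne hσ).choose_spec, add_neg_cancel]
  · rw [mem_filter, ← unpairedBlocks_nonempty_iff,
      unpairedBlocks_rematch (hne hσ).choose_spec]
    exact ⟨mem_univ _, hne hσ⟩
  · rw [hchoose _ (hne hσ) (unpairedBlocks_rematch (hne hσ).choose_spec),
      rematch_rematch (hne hσ).choose_spec]

theorem sum_pfaffianTerm_eq_prod (hA : ∀ i j, A j i = -A i j) (hrank : OffBlockRankOne A) :
    ∑ σ, pfaffianTerm A σ
      = (Fintype.card β).factorial * 2 ^ Fintype.card β * ∏ k, A (k, 0) (k, 1) := by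
  rw [← sum_filter_add_sum_filter_not univ (Commute · pairSwap),
    sum_pfaffianTerm_commute hA, sum_pfaffianTerm_not_commute hA hrank, add_zero]

end PairedBlocks

open PairedBlocks

def finPairEquiv (n : ℕ) : Fin n × Fin 2 ≃ Fin (2 * n) :=
  finProdFinEquiv.trans (finCongr (Nat.mul_comm n 2))

@[simp] lemma finPairEquiv_apply_val {n : ℕ} (x : Fin n × Fin 2) :
    (finPairEquiv n x : ℕ) = 2 * x.1 + x.2 := by
  simp [finPairEquiv]
  omega

lemma pfaffian_eq_sum_pfaffianTerm (n : ℕ) (A : Matrix (Fin (2 * n)) (Fin (2 * n)) ℂ) :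
    pfaffian n A = ((2 : ℂ) ^ n * n.factorial)⁻¹ *
      ∑ ρ, pfaffianTerm (A.submatrix (finPairEquiv n) (finPairEquiv n)) ρ := by
  have hslot₀ (k : Fin n) (h : 2 * (k : ℕ) < 2 * n) :
      (⟨2 * k, h⟩ : Fin (2 * n)) = finPairEquiv n (k, 0) := Fin.ext (by simp)
  have hslot₁ (k : Fin n) (h : 2 * (k : ℕ) + 1 < 2 * n) :
      (⟨2 * k + 1, h⟩ : Fin (2 * n)) = finPairEquiv n (k, 1) := Fin.ext (by simp)
  rw [pfaffian, ← (finPairEquiv n).permCongr.sum_comp]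
  congr 1
  refine sum_congr rfl fun ρ _ => ?_
  simp only [pfaffianTerm, sign_permCongr, Matrix.submatrix_apply, permCongr_apply, hslot₀,
    hslot₁, symm_apply_apply]

theorem pfaffian_eq_prod_of_offBlockRankOne (n : ℕ) (A : Matrix (Fin (2 * n)) (Fin (2 * n)) ℂ)
    (hA : ∀ i j, A j i = -A i j)
    (hrank : OffBlockRankOne (A.submatrix (finPairEquiv n) (finPairEquiv n))) :
    pfaffian n A = ∏ k, A (finPairEquiv n (k, 0)) (finPairEquiv n (k, 1)) := by
  rw [pfaffian_eq_sum_pfaffianTerm, sum_pfaffianTerm_eq_prod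
    (A := A.submatrix (finPairEquiv n) (finPairEquiv n)) (fun _ _ => hA _ _) hrank, Fintype.card_fin, mul_comm (n.factorial : ℂ), ← mul_assoc,
    inv_mul_cancel₀ (by simp [Nat.factorial_ne_zero]), one_mul]
  rfl

section Spn

variable {n : ℕ} (z : ℕ → ℂ)

lemma Spn_swap (a b : Fin (2 * n)) : Spn n z b a = -Spn n z a b := by
  unfold Spn
  split_ifs <;> first | omega | simp

lemma Spn_finPairEquiv_of_fst_ne {x y : Fin n × Fin 2} (h : x.1 ≠ y.1) :
    Spn n z (finPairEquiv n x) (finPairEquiv n y)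
      = (if x.1 < y.1 then 1 else -1)
        * (wCoord z (finPairEquiv n x) * wCoord z (finPairEquiv n y)) := by
  have hx := x.2.isLt
  have hy := y.2.isLt
  have hxy : (x.1 : ℕ) ≠ y.1 := Fin.val_ne_of_ne h
  unfold Spn wBracket
  simp only [finPairEquiv_apply_val, Fin.lt_def]
  split_ifs <;> first | omega | ring

lemma offBlockRankOne_Spn :
    OffBlockRankOne ((Spn n z).submatrix (finPairEquiv n) (finPairEquiv n)) := by
  intro x x' y y' hx hy hy'
  simp only [Matrix.submatrix_apply]
  rw [Spn_finPairEquiv_of_fst_ne z hy.symm, Spn_finPairEquiv_of_fst_ne z (hx ▸ hy'.symm),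
    Spn_finPairEquiv_of_fst_ne z hy'.symm, Spn_finPairEquiv_of_fst_ne z (hx ▸ hy.symm), ← hx]
  split_ifs <;> ring

lemma Spn_finPairEquiv_zero_one (k : Fin n) :
    Spn n z (finPairEquiv n (k, 0)) (finPairEquiv n (k, 1))
      = 2 * (1 + ∑ ℓ ∈ range (k + 1), z ℓ * starRingEnd ℂ (z ℓ)) := by
  simp [Spn, wBracket]
  omega

theorem pfaffian_Spn (n : ℕ) :
    pfaffian n (Spn n z)
      = 2 ^ n * ∏ k ∈ range n, (1 + ∑ ℓ ∈ range (k + 1), z ℓ * starRingEnd ℂ (z ℓ)) := by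
  rw [pfaffian_eq_prod_of_offBlockRankOne n _ (Spn_swap z) (offBlockRankOne_Spn z)]
  simp only [Spn_finPairEquiv_zero_one, prod_mul_distrib, prod_const, card_univ, Fintype.card_fin]
  rw [Fin.prod_univ_eq_prod_range (fun k => 1 + ∑ ℓ ∈ range (k + 1), z ℓ * starRingEnd ℂ (z ℓ))]

end Spn

lemma one_add_sum_mul_conj_ne_zero {ι : Type*} (s : Finset ι) (w : ι → ℂ) :
    1 + ∑ ℓ ∈ s, w ℓ * starRingEnd ℂ (w ℓ) ≠ 0 := by
  simp_rw [Complex.mul_conj]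
  norm_cast
  exact (add_pos_of_pos_of_nonneg one_pos (sum_nonneg fun ℓ _ => Complex.normSq_nonneg _)).ne'

/-- the Pfaffian recursion
`Pf(S^{(n)}) = 2 Pf(S^{(n-1)}) (1 + ∑_{ℓ≤n} |z_ℓ|²)`, the closed formula
`Pf(S^{(n)}) = 2^n ∏_{k=1}^n (1 + ∑_{ℓ≤k} |z_ℓ|²)`, and nonvanishing. -/
theorem pfaffian_recursion_standard_sphere (n : ℕ) (hn : 1 ≤ n) (z : ℕ → ℂ) :
    pfaffian n (Spn n z)
        = 2 * pfaffian (n - 1) (Spn (n - 1) z) *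
            (1 + ∑ ℓ ∈ Finset.range n, z ℓ * starRingEnd ℂ (z ℓ)) ∧
    pfaffian n (Spn n z)
        = 2 ^ n * ∏ k ∈ Finset.range n,
            (1 + ∑ ℓ ∈ Finset.range (k + 1), z ℓ * starRingEnd ℂ (z ℓ)) ∧
    pfaffian n (Spn n z) ≠ 0 := by
  obtain ⟨m, rfl⟩ : ∃ m, n = m + 1 := ⟨n - 1, by omega⟩
  refine ⟨?_, pfaffian_Spn z _, ?_⟩
  · rw [pfaffian_Spn, pfaffian_Spn, Nat.add_sub_cancel, prod_range_succ, pow_succ]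
    ring
  · rw [pfaffian_Spn]
    exact mul_ne_zero (pow_ne_zero _ two_ne_zero)
      (prod_ne_zero_iff.mpr fun k _ => one_add_sum_mul_conj_ne_zero _ z)
end

section
/- Let 0 < q < 1 and let σ(α), σ(τ) be the operators on ℓ²(ℕ) given by σ(α)|m⟩ = q^{m-1}(1-q^{2m})^{1/2}|m-1⟩ and σ(τ)|m⟩ = q^{2m}|m⟩. On the n-fold tensor product ℓ²(ℕ)^{⊗n}, define A_i = σ(α)_i · Π_{k<i} σ(τ)_k^{1/2} · Π_{k>i} σ(τ)_k (acting as σ(τ)^{1/2} or σ(τ) in the k-th factor, noting σ(τ)^{1/2}|m⟩ = q^m|m⟩), and T = σ(τ)_1 ⊗ ··· ⊗ σ(τ)_n. Then for i < j: A_i T = q² T A_i, A_i A_j = q^{-1} A_j A_i, and A_i A_j* = q³ A_j* A_i. -/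
open Finset

/-- The prefactor `∏_{k<i} q^{m_k} ∏_{k>i} q^{2 m_k}` coming from
`Π_{k<i} σ(τ)_k^{1/2} Π_{k>i} σ(τ)_k` acting on the basis vector `|m⟩`. -/
noncomputable def tauPrefactor (q : ℝ) {n : ℕ} (i : Fin n) (m : Fin n → ℕ) : ℂ :=
  ∏ k : Fin n,
    (if k < i then (q : ℂ) ^ (m k) else if i < k then (q : ℂ) ^ (2 * m k) else 1)

/-- `A_i = σ_n(a_i) = σ(α)_i · Π_{k<i} σ(τ)_k^{1/2} · Π_{k>i} σ(τ)_k` on the span of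
the orthonormal basis `{|m⟩ : m ∈ ℕⁿ}` of `ℓ²(ℕ)^{⊗n}`:
`A_i |m⟩ = q^{m_i-1}(1-q^{2m_i})^{1/2} ∏_{k<i} q^{m_k} ∏_{k>i} q^{2m_k} |m - δ_i⟩`. -/
noncomputable def aOp (q : ℝ) {n : ℕ} (i : Fin n) :
    ((Fin n → ℕ) →₀ ℂ) →ₗ[ℂ] ((Fin n → ℕ) →₀ ℂ) :=
  Finsupp.lsum ℂ fun m =>
    (((q : ℂ) ^ (m i - 1) * (Real.sqrt (1 - q ^ (2 * m i)) : ℂ) * tauPrefactor q i m) •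
      Finsupp.lsingle (Function.update m i (m i - 1)))

/-- The adjoint `A_i*`:
`A_i* |m⟩ = q^{m_i}(1-q^{2(m_i+1)})^{1/2} ∏_{k<i} q^{m_k} ∏_{k>i} q^{2m_k} |m + δ_i⟩`. -/
noncomputable def aStarOp (q : ℝ) {n : ℕ} (i : Fin n) :
    ((Fin n → ℕ) →₀ ℂ) →ₗ[ℂ] ((Fin n → ℕ) →₀ ℂ) :=
  Finsupp.lsum ℂ fun m =>
    (((q : ℂ) ^ (m i) * (Real.sqrt (1 - q ^ (2 * (m i + 1))) : ℂ) * tauPrefactor q i m) •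
      Finsupp.lsingle (Function.update m i (m i + 1)))

/-- `T = σ_n(t) = σ(τ)^{⊗n}`: `T|m⟩ = q^{2(m_1+⋯+m_n)}|m⟩`. -/
noncomputable def tOp (q : ℝ) {n : ℕ} :
    ((Fin n → ℕ) →₀ ℂ) →ₗ[ℂ] ((Fin n → ℕ) →₀ ℂ) :=
  Finsupp.lsum ℂ fun m => (((q : ℂ) ^ (2 * ∑ k, m k)) • Finsupp.lsingle m)


lemma aOp_single (q : ℝ) {n : ℕ} (i : Fin n) (m : Fin n → ℕ) (c : ℂ) :
    aOp q i (Finsupp.single m c) =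
      ((q : ℂ) ^ (m i - 1) * (Real.sqrt (1 - q ^ (2 * m i)) : ℂ) * tauPrefactor q i m) •
        Finsupp.single (Function.update m i (m i - 1)) c := by
  simp [aOp]

lemma aStarOp_single (q : ℝ) {n : ℕ} (i : Fin n) (m : Fin n → ℕ) (c : ℂ) :
    aStarOp q i (Finsupp.single m c) =
      ((q : ℂ) ^ (m i) * (Real.sqrt (1 - q ^ (2 * (m i + 1))) : ℂ) * tauPrefactor q i m) •
        Finsupp.single (Function.update m i (m i + 1)) c := by
  simp [aStarOp]

lemma tOp_single (q : ℝ) {n : ℕ} (m : Fin n → ℕ) (c : ℂ) :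
    tOp q (Finsupp.single m c) =
      ((q : ℂ) ^ (2 * ∑ k, m k)) • Finsupp.single m c := by
  simp [tOp]

lemma tauPref_upd_gt (q : ℝ) {n : ℕ} {i j : Fin n} (hij : i < j) (m : Fin n → ℕ) (v : ℕ) :
    tauPrefactor q i (Function.update m j v) * (q:ℂ)^(2 * m j)
      = tauPrefactor q i m * (q:ℂ)^(2*v) := by
  unfold tauPrefactor
  rw [← Finset.mul_prod_erase _ _ (mem_univ j), ← Finset.mul_prod_erase _ _ (mem_univ j)]
  have hj : ¬ j < i := not_lt.2 hij.le
  have h2 : ∏ k ∈ univ.erase j, (if k < i then (q : ℂ) ^ (Function.update m j v k) else if i < k then (q : ℂ) ^ (2 * Function.update m j v k) else 1) = ∏ k ∈ univ.erase j, (if k < i then (q : ℂ) ^ (m k) else if i < k then (q : ℂ) ^ (2 * m k) else 1) := by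
    refine Finset.prod_congr rfl fun k hk => ?_
    rw [Function.update_of_ne (Finset.mem_erase.1 hk).1]
  rw [h2]
  simp [hj, hij, Function.update_self]
  ring

lemma tauPref_upd_lt (q : ℝ) {n : ℕ} {i j : Fin n} (hij : i < j) (m : Fin n → ℕ) (v : ℕ) :
    tauPrefactor q j (Function.update m i v) * (q:ℂ)^(m i)
      = tauPrefactor q j m * (q:ℂ)^v := by
  unfold tauPrefactor
  rw [← Finset.mul_prod_erase _ _ (mem_univ i), ← Finset.mul_prod_erase _ _ (mem_univ i)]
  have h2 : ∏ k ∈ univ.erase i, (if k < j then (q : ℂ) ^ (Function.update m i v k) else if j < k then (q : ℂ) ^ (2 * Function.update m i v k) else 1) = ∏ k ∈ univ.erase i, (if k < j then (q : ℂ) ^ (m k) else if j < k then (q : ℂ) ^ (2 * m k) else 1) := by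
    refine Finset.prod_congr rfl fun k hk => ?_
    rw [Function.update_of_ne (Finset.mem_erase.1 hk).1]
  rw [h2]
  simp [hij, Function.update_self]
  ring

/-- in the representation `σ_n`, for `i < j`:
`A_i T = q² T A_i`, `A_i A_j = q⁻¹ A_j A_i`, `A_i A_j* = q³ A_j* A_i`. -/
theorem quantum_even_sphere_first_relations (q : ℝ) (hq0 : 0 < q) (hq1 : q < 1) (n : ℕ) :
    (∀ i : Fin n, aOp q i ∘ₗ tOp q = ((q : ℂ) ^ 2) • (tOp q ∘ₗ aOp q i)) ∧
    (∀ i j : Fin n, i < j →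
      aOp q i ∘ₗ aOp q j = ((q : ℂ))⁻¹ • (aOp q j ∘ₗ aOp q i)) ∧
    (∀ i j : Fin n, i < j →
      aOp q i ∘ₗ aStarOp q j = ((q : ℂ) ^ 3) • (aStarOp q j ∘ₗ aOp q i)) := by
  have hq : (q:ℂ) ≠ 0 := by exact_mod_cast hq0.ne'
  refine ⟨?_, ?_, ?_⟩
  · intro i
    apply Finsupp.lhom_ext
    intro m c
    simp only [LinearMap.comp_apply, LinearMap.smul_apply, aOp_single, tOp_single,
      map_smul, smul_smul]
    rcases Nat.eq_zero_or_pos (m i) with h0 | hpos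
    · simp [h0]
    · obtain ⟨a, ha⟩ : ∃ a, m i = a + 1 := ⟨m i - 1, (Nat.succ_pred_eq_of_pos hpos).symm⟩
      congr 1
      rw [Finset.sum_update_of_mem (mem_univ i), ← Finset.add_sum_erase _ m (mem_univ i), ha]
      simp only [Nat.add_sub_cancel, Finset.erase_eq]
      set R := ∑ k ∈ univ \ {i}, m k
      set s : ℂ := (Real.sqrt (1 - q ^ (2 * (a+1))) : ℂ)
      set P := tauPrefactor q i m
      rw [show 2*(a+1+R) = 2 + 2*(a+R) by ring, pow_add]
      ring
  · intro i j hij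
    have hne : i ≠ j := hij.ne
    apply Finsupp.lhom_ext
    intro m c
    simp only [LinearMap.comp_apply, LinearMap.smul_apply, aOp_single,
      map_smul, smul_smul, Function.update_of_ne hne, Function.update_of_ne hne.symm]
    rw [Function.update_comm hne]
    rcases Nat.eq_zero_or_pos (m i) with h0 | hposi
    · simp [h0]
    rcases Nat.eq_zero_or_pos (m j) with h0 | hposj
    · simp [h0]
    congr 1
    obtain ⟨a, ha⟩ : ∃ a, m i = a + 1 := ⟨m i - 1, (Nat.succ_pred_eq_of_pos hposi).symm⟩
    obtain ⟨b, hb⟩ : ∃ b, m j = b + 1 := ⟨m j - 1, (Nat.succ_pred_eq_of_pos hposj).symm⟩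
    have h1 : tauPrefactor q i (Function.update m j (m j - 1))
        = tauPrefactor q i m * (q:ℂ)^(2*(m j - 1)) / (q:ℂ)^(2*m j) :=
      (eq_div_iff (pow_ne_zero _ hq)).2 (tauPref_upd_gt q hij m _)
    have h2 : tauPrefactor q j (Function.update m i (m i - 1))
        = tauPrefactor q j m * (q:ℂ)^(m i - 1) / (q:ℂ)^(m i) :=
      (eq_div_iff (pow_ne_zero _ hq)).2 (tauPref_upd_lt q hij m _)
    rw [h1, h2, ha, hb]
    simp only [Nat.add_sub_cancel]
    set si : ℂ := (Real.sqrt (1 - q ^ (2 * (a+1))) : ℂ)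
    set sj : ℂ := (Real.sqrt (1 - q ^ (2 * (b+1))) : ℂ)
    set Pi' := tauPrefactor q i m
    set Pj := tauPrefactor q j m
    rw [show 2*(b+1) = 2*b + 2 by ring, pow_add, pow_add]
    field_simp
  · intro i j hij
    have hne : i ≠ j := hij.ne
    apply Finsupp.lhom_ext
    intro m c
    simp only [LinearMap.comp_apply, LinearMap.smul_apply, aOp_single, aStarOp_single,
      map_smul, smul_smul, Function.update_of_ne hne, Function.update_of_ne hne.symm]
    rw [Function.update_comm hne]
    rcases Nat.eq_zero_or_pos (m i) with h0 | hposi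
    · simp [h0]
    congr 1
    obtain ⟨a, ha⟩ : ∃ a, m i = a + 1 := ⟨m i - 1, (Nat.succ_pred_eq_of_pos hposi).symm⟩
    have h1 : tauPrefactor q i (Function.update m j (m j + 1))
        = tauPrefactor q i m * (q:ℂ)^(2*(m j + 1)) / (q:ℂ)^(2*m j) :=
      (eq_div_iff (pow_ne_zero _ hq)).2 (tauPref_upd_gt q hij m _)
    have h2 : tauPrefactor q j (Function.update m i (m i - 1))
        = tauPrefactor q j m * (q:ℂ)^(m i - 1) / (q:ℂ)^(m i) :=
      (eq_div_iff (pow_ne_zero _ hq)).2 (tauPref_upd_lt q hij m _)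
    rw [h1, h2, ha]
    simp only [Nat.add_sub_cancel]
    set si : ℂ := (Real.sqrt (1 - q ^ (2 * (a+1))) : ℂ)
    set sj : ℂ := (Real.sqrt (1 - q ^ (2 * (m j + 1))) : ℂ)
    set Pi' := tauPrefactor q i m
    set Pj := tauPrefactor q j m
    rw [show 2*(m j + 1) = 2*(m j) + 2 by ring, pow_add, pow_add]
    field_simp
end

section
/- Let 0 < q < 1 and define Pol(ℝ_q^{2n+1}) as the *-algebra generated by x_1,...,x_n, x_1*,...,x_n*, y = y* with relations x_i y = q² y x_i, x_i x_j = q^{-1} x_j x_i and x_i x_j* = q³ x_j* x_i for i < j, and x_i x_i* = q² x_i* x_i + q²(1-q²) Σ_{ℓ<i} x_ℓ* x_ℓ + (1-q²) y². Let φ_n be the algebra automorphism with φ_n(x_i) = q²x_i, φ_n(y) = q²y. Define matrices e_{2k} ∈ M_{2^k}(Pol(ℝ_q^{2n+1})) recursively by e_0 = 1-y and e_{2(k+1)} = [[e_{2k}, C_{2k} x_{k+1}*],[C_{2k} x_{k+1}, 1-φ_n(e_{2k})]], where C_0 = q and C_{2(k+1)} = diag(C_{2k}, qC_{2k}) ∈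 M_{2^{k+1}}(ℂ). Then for all k < ℓ ≤ n: e_{2k} C_{2k} x_ℓ* = C_{2k} x_ℓ* φ_n(e_{2k}) in M_{2^k}(Pol(ℝ_q^{2n+1})). -/
open Matrix

/-- Identification `Fin 2^k ⊕ Fin 2^k ≃ Fin 2^{k+1}` used for block matrices. -/
def powEquiv (k : ℕ) : Fin (2 ^ k) ⊕ Fin (2 ^ k) ≃ Fin (2 ^ (k + 1)) :=
  finSumFinEquiv.trans (finCongr (by rw [pow_succ, mul_two]))

/-- The scalar matrices `C_{2k} ∈ M_{2^k}(ℂ)`: `C_0 = q`,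
`C_{2(k+1)} = diag(C_{2k}, q C_{2k})`. -/
noncomputable def cMat (q : ℝ) : (k : ℕ) → Matrix (Fin (2 ^ k)) (Fin (2 ^ k)) ℂ
  | 0 => (q : ℂ) • 1
  | k + 1 =>
    Matrix.reindex (powEquiv k) (powEquiv k)
      (Matrix.fromBlocks (cMat q k) 0 0 ((q : ℂ) • cMat q k))

/-- The recursively defined matrices `e_{2k} ∈ M_{2^k}(R)`: `e_0 = 1 - y` and
`e_{2(k+1)} = [[e_{2k}, C_{2k} x_{k+1}*], [C_{2k} x_{k+1}, 1 - φ(e_{2k})]]`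
(0-indexed: the step from `k` to `k+1` uses `x k`, `xs k = x k *`). -/
noncomputable def eMat {R : Type*} [Ring R] [Algebra ℂ R] (q : ℝ) (y : R)
    (x xs : ℕ → R) (φ : R →ₐ[ℂ] R) :
    (k : ℕ) → Matrix (Fin (2 ^ k)) (Fin (2 ^ k)) R
  | 0 => (1 - y) • 1
  | k + 1 =>
    Matrix.reindex (powEquiv k) (powEquiv k)
      (Matrix.fromBlocks (eMat q y x xs φ k)
        ((cMat q k).map (algebraMap ℂ R) * (xs k • 1))
        ((cMat q k).map (algebraMap ℂ R) * (x k • 1))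
        (1 - (eMat q y x xs φ k).map φ))

section Aux

set_option linter.unusedSectionVars false

variable {R : Type*} [Ring R] [Algebra ℂ R] {m : Type*} [Fintype m] [DecidableEq m]

private lemma aux_smul_one_mul (a b : R) :
    (a • (1 : Matrix m m R)) * (b • 1) = (a * b) • 1 := by
  ext i j
  by_cases h : i = j <;>
    simp [Matrix.mul_apply, Matrix.one_apply, h, Finset.sum_ite_eq, mul_ite, ite_mul]

private lemma aux_central (M : Matrix m m ℂ) (r : R) :
    M.map (algebraMap ℂ R) * (r • 1) = (r • 1) * M.map (algebraMap ℂ R) := by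
  ext i j
  simp [Matrix.mul_apply, Matrix.one_apply, mul_ite, ite_mul, Finset.sum_ite_eq,
    Finset.sum_ite_eq', Algebra.commutes]

private lemma aux_map_smul_one (φ : R →ₐ[ℂ] R) (a : R) :
    ((a • (1 : Matrix m m R)).map φ) = φ a • 1 := by
  ext i j
  by_cases h : i = j <;> simp [Matrix.one_apply, h]

private lemma aux_map_map (φ : R →ₐ[ℂ] R) (M : Matrix m m ℂ) :
    (M.map (algebraMap ℂ R)).map φ = M.map (algebraMap ℂ R) := by
  ext i j; simp [AlgHom.commutes]

private lemma aux_map_mul (φ : R →ₐ[ℂ] R) (X Y : Matrix m m R) :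
    (X * Y).map ⇑φ = X.map ⇑φ * Y.map ⇑φ := by
  ext i j; simp [Matrix.mul_apply, map_sum]

private lemma aux_map_one (φ : R →ₐ[ℂ] R) :
    (1 : Matrix m m R).map ⇑φ = 1 :=
  Matrix.map_one _ (map_zero φ) (map_one φ)

private lemma aux_map_sub (φ : R →ₐ[ℂ] R) (X Y : Matrix m m R) :
    (X - Y).map ⇑φ = X.map ⇑φ - Y.map ⇑φ := by
  ext i j; simp

private lemma aux_map_qsmul (c : ℂ) (M : Matrix m m ℂ) :
    (c • M).map (algebraMap ℂ R) = c • M.map (algebraMap ℂ R) := by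
  ext i j
  rw [Matrix.map_apply, Matrix.smul_apply, Matrix.smul_apply, smul_eq_mul,
    _root_.map_mul, Matrix.map_apply, Algebra.smul_def]

private lemma aux_cs_mul (M : Matrix m m ℂ) (b c : R) :
    (M.map (algebraMap ℂ R) * (b • 1)) * (M.map (algebraMap ℂ R) * (c • 1))
      = (M.map (algebraMap ℂ R) * M.map (algebraMap ℂ R)) * ((b * c) • 1) := by
  rw [mul_assoc, ← mul_assoc (b • 1), ← aux_central, mul_assoc, aux_smul_one_mul,
    ← mul_assoc]

end Aux

/-- the commutation lemma `e_{2k} C_{2k} x_ℓ* = C_{2k} x_ℓ* φ_n(e_{2k})`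
for `k < ℓ ≤ n` (here 0-indexed: `k ≤ ℓ < n`), in any ℂ-star-algebra `R` with
elements `x_1,…,x_n`, `y = y*` satisfying the relations of `Pol(ℝ_q^{2n+1})`, and
`φ` an algebra endomorphism scaling the generators by `q²`. -/
theorem eMat_commutation_lemma {R : Type*} [Ring R] [StarRing R] [Algebra ℂ R]
    [StarModule ℂ R] (q : ℝ) (hq0 : 0 < q) (hq1 : q < 1) (n : ℕ)
    (y : R) (hy : star y = y) (x : ℕ → R)
    (hxy : ∀ i < n, x i * y = ((q : ℂ) ^ 2) • (y * x i))
    (hxx : ∀ i j, i < j → j < n → x i * x j = ((q : ℂ))⁻¹ • (x j * x i))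
    (hxxs : ∀ i j, i < j → j < n →
      x i * star (x j) = ((q : ℂ) ^ 3) • (star (x j) * x i))
    (hxxsi : ∀ i < n,
      x i * star (x i)
        = ((q : ℂ) ^ 2) • (star (x i) * x i)
          + ((q : ℂ) ^ 2 * (1 - (q : ℂ) ^ 2)) •
              ∑ ℓ ∈ Finset.range i, star (x ℓ) * x ℓ
          + (1 - (q : ℂ) ^ 2) • (y * y))
    (φ : R →ₐ[ℂ] R)
    (hφx : ∀ i, φ (x i) = ((q : ℂ) ^ 2) • x i)
    (hφxs : ∀ i, φ (star (x i)) = ((q : ℂ) ^ 2) • star (x i))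
    (hφy : φ y = ((q : ℂ) ^ 2) • y) :
    ∀ k ℓ : ℕ, k ≤ ℓ → ℓ < n →
      eMat q y x (fun i => star (x i)) φ k *
          ((cMat q k).map (algebraMap ℂ R) * (star (x ℓ) • 1))
        = ((cMat q k).map (algebraMap ℂ R) * (star (x ℓ) • 1)) *
            (eMat q y x (fun i => star (x i)) φ k).map φ := by
  have hq : (q : ℂ) ≠ 0 := by exact_mod_cast hq0.ne'
  have hqs : ∀ m : ℕ, star ((q : ℂ) ^ m) = (q : ℂ) ^ m := by
    intro m; simp [Complex.star_def, ← Complex.ofReal_pow, Complex.conj_ofReal]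
  have hyxs : ∀ i < n, y * star (x i) = ((q : ℂ) ^ 2) • (star (x i) * y) := by
    intro i hi
    have := congrArg star (hxy i hi)
    simpa [star_smul, StarMul.star_mul, hy, hqs 2] using this
  have hxsxs : ∀ i j, i < j → j < n →
      star (x i) * star (x j) = (q : ℂ) • (star (x j) * star (x i)) := by
    intro i j hij hj
    have h := congrArg star (hxx i j hij hj)
    simp only [StarMul.star_mul, star_smul, star_inv₀, Complex.star_def,
      Complex.conj_ofReal] at h
    rw [h, smul_smul, mul_inv_cancel₀ hq, one_smul]
  intro k
  induction k with
  | zero =>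
    intro ℓ _ hln
    have hc0 : ((q : ℂ) • (1 : Matrix (Fin (2 ^ 0)) (Fin (2 ^ 0)) ℂ)).map (algebraMap ℂ R)
        = (q : ℂ) • 1 := by
      rw [Matrix.map_smul _ _ (fun a => by
        rw [smul_eq_mul, _root_.map_mul, Algebra.smul_def]),
        Matrix.map_one _ (map_zero _) (map_one _)]
    simp only [eMat, cMat, hc0]
    rw [show ((q : ℂ) • (1 : Matrix (Fin (2 ^ 0)) (Fin (2 ^ 0)) R)) * (star (x ℓ) • 1)
          = ((q : ℂ) • star (x ℓ)) • 1 from by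
        rw [Matrix.smul_mul, Matrix.one_mul, smul_assoc]]
    rw [aux_map_smul_one, aux_smul_one_mul, aux_smul_one_mul]
    congr 1
    rw [mul_smul_comm, smul_mul_assoc]
    refine congrArg (((q : ℂ)) • ·) ?_
    rw [map_sub, _root_.map_one, hφy, sub_mul, one_mul, mul_sub, mul_one, mul_smul_comm,
      ← hyxs ℓ hln]
  | succ k ih =>
    intro ℓ hkl hln
    have hkl' : k < ℓ := hkl
    have h1 : (star (x ℓ) • (1 : Matrix (Fin (2 ^ (k + 1))) (Fin (2 ^ (k + 1))) R))
        = (star (x ℓ) • (1 : Matrix (Fin (2 ^ k) ⊕ Fin (2 ^ k)) (Fin (2 ^ k) ⊕ Fin (2 ^ k)) R)).submatrix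
            (powEquiv k).symm (powEquiv k).symm := by
      ext i j
      simp [Matrix.submatrix_apply, Matrix.one_apply]
    simp only [eMat, cMat, Matrix.reindex_apply]
    rw [h1]
    simp only [← Matrix.submatrix_map, Matrix.submatrix_mul_equiv]
    refine congrArg (fun X : Matrix (Fin (2 ^ k) ⊕ Fin (2 ^ k)) (Fin (2 ^ k) ⊕ Fin (2 ^ k)) R =>
      X.submatrix ⇑(powEquiv k).symm ⇑(powEquiv k).symm) ?_
    have hCb : (fromBlocks (cMat q k) 0 0 ((q : ℂ) • cMat q k)).map (algebraMap ℂ R)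
        = fromBlocks ((cMat q k).map (algebraMap ℂ R)) 0 0
            ((q : ℂ) • (cMat q k).map (algebraMap ℂ R)) := by
      rw [Matrix.fromBlocks_map, aux_map_qsmul]
      simp only [Matrix.map_zero _ (map_zero (algebraMap ℂ R))]
    have hS : (star (x ℓ) • (1 : Matrix (Fin (2 ^ k) ⊕ Fin (2 ^ k)) (Fin (2 ^ k) ⊕ Fin (2 ^ k)) R))
        = fromBlocks (star (x ℓ) • 1) 0 0 (star (x ℓ) • 1) := by
      rw [← Matrix.fromBlocks_one, Matrix.fromBlocks_smul, smul_zero]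
    rw [hCb, hS, Matrix.fromBlocks_multiply]
    simp only [Matrix.mul_zero, Matrix.zero_mul, add_zero, zero_add]
    rw [Matrix.fromBlocks_map]
    rw [Matrix.fromBlocks_multiply, Matrix.fromBlocks_multiply]
    simp only [Matrix.mul_zero, Matrix.zero_mul, add_zero, zero_add]
    refine Matrix.fromBlocks_inj.mpr ⟨ih ℓ hkl'.le hln, ?_, ?_, ?_⟩
    · -- top-right block
      rw [aux_map_mul, aux_map_map, aux_map_smul_one, hφxs k,
        Matrix.smul_mul, Matrix.mul_smul,
        aux_cs_mul, aux_cs_mul, hxsxs k ℓ hkl' hln,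
        mul_smul_comm ((q : ℂ) ^ 2) (star (x ℓ)) (star (x k))]
      simp only [smul_assoc, Matrix.mul_smul, smul_smul]
      norm_num [sq]
    · -- bottom-left block
      rw [aux_map_mul, aux_map_map, aux_map_smul_one, hφx k,
        Matrix.smul_mul, Matrix.smul_mul,
        aux_cs_mul, aux_cs_mul, hxxs k ℓ hkl' hln,
        mul_smul_comm ((q : ℂ) ^ 2) (star (x ℓ)) (x k)]
      simp only [smul_assoc, Matrix.mul_smul, smul_smul]
      norm_num [show ((3:ℕ)) = 2 + 1 from rfl, pow_succ, pow_two, mul_comm, mul_assoc]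
    · -- bottom-right block
      rw [aux_map_sub, aux_map_one, Matrix.smul_mul, Matrix.mul_smul, Matrix.smul_mul]
      refine congrArg (((q : ℂ)) • ·) ?_
      rw [sub_mul, one_mul, mul_sub, mul_one]
      have hmain := congrArg (fun X => Matrix.map X ⇑φ) (ih ℓ hkl'.le hln)
      simp only [aux_map_mul, aux_map_map, aux_map_smul_one, hφxs ℓ] at hmain
      simp only [smul_assoc, Matrix.mul_smul, Matrix.smul_mul] at hmain
      have h2 := congrArg (fun X => (((q : ℂ) ^ 2)⁻¹ : ℂ) • X) hmain
      simp only [smul_smul, inv_mul_cancel₀ (pow_ne_zero 2 hq), one_smul] at h2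
      rw [h2]
end

section
/- With e_{2k} ∈ M_{2^k}(Pol(ℝ_q^{2n+1})) defined recursively by e_0 = 1-y and e_{2(k+1)} = [[e_{2k}, C_{2k}x_{k+1}*],[C_{2k}x_{k+1}, 1-φ_n(e_{2k})]] where φ_n(y) = q²y, the matrix trace satisfies Tr(e_{2k}) = 2^{k-1} - (1-q²)^k y for all k ≥ 1. Consequently the projector G_{2n} on the quantum sphere satisfies Tr(G_{2n}) = 2^{n-1} - (1-q²)^n t. -/
open Matrix

/-!
Taking traces of the block recursion gives `Tr e_{2(k+1)} = 2^k + (Tr e_{2k} - φ(Tr e_{2k}))`,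
starting from `Tr e_0 = 1 - y`. Since `φ` fixes scalars and multiplies `y` by `q²`, the map
`T ↦ T - φ T` kills the scalar part of `Tr e_{2k}` and multiplies its `y`-coefficient
by `1 - q²`.
-/

theorem Matrix.trace_reindex {R m n : Type*} [AddCommMonoid R] [Fintype m] [Fintype n]
    (e : m ≃ n) (M : Matrix m m R) : trace (reindex e e M) = trace M :=
  e.symm.sum_comp fun i => M i i

theorem Matrix.trace_fromBlocks {R m n : Type*} [AddCommMonoid R] [Fintype m] [Fintype n]
    (A : Matrix m m R) (B : Matrix m n R) (C : Matrix n m R) (D : Matrix n n R) :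
    trace (fromBlocks A B C D) = trace A + trace D :=
  Fintype.sum_sum_type _

section

variable {R : Type*} [Ring R] [Algebra ℂ R] (q : ℝ) (y : R) (x xs : ℕ → R)
  (φ : R →ₐ[ℂ] R)

theorem trace_eMat_zero : trace (eMat q y x xs φ 0) = 1 - y := by
  simp [eMat, trace_smul]

theorem trace_eMat_succ (k : ℕ) :
    trace (eMat q y x xs φ (k + 1))
      = 2 ^ k + (trace (eMat q y x xs φ k) - φ (trace (eMat q y x xs φ k))) := by
  rw [eMat, trace_reindex, trace_fromBlocks, trace_sub, trace_one, Fintype.card_fin,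
    ← AddMonoidHom.map_trace φ]
  push_cast
  abel

theorem trace_eMat_succ_eq_sub_smul (hφy : φ y = ((q : ℂ) ^ 2) • y) (k : ℕ) :
    trace (eMat q y x xs φ (k + 1)) = 2 ^ k - ((1 - (q : ℂ) ^ 2) ^ (k + 1)) • y := by
  induction k with
  | zero =>
    rw [trace_eMat_succ, trace_eMat_zero, map_sub, map_one, hφy, pow_zero, zero_add, pow_one,
      sub_smul, one_smul]
    abel
  | succ k ih =>
    rw [trace_eMat_succ, ih, map_sub, map_pow, map_ofNat, map_smul, hφy, pow_succ _ (k + 1),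
      mul_smul, sub_smul, one_smul, smul_sub, pow_succ 2 k, mul_two]
    abel

theorem trace_eMat_of_one_le (hφy : φ y = ((q : ℂ) ^ 2) • y) {k : ℕ} (hk : 1 ≤ k) :
    trace (eMat q y x xs φ k) = 2 ^ (k - 1) - ((1 - (q : ℂ) ^ 2) ^ k) • y := by
  obtain ⟨j, rfl⟩ := Nat.exists_eq_add_of_le' hk
  exact trace_eMat_succ_eq_sub_smul q y x xs φ hφy j

end

theorem eMat_trace_general {R : Type*} [Ring R] [Algebra ℂ R]
    (q : ℝ) (n : ℕ) (hn : 1 ≤ n)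
    (y : R) (x xs : ℕ → R) (φ : R →ₐ[ℂ] R)
    (hφy : φ y = ((q : ℂ) ^ 2) • y) :
    (∀ k, 1 ≤ k → k ≤ n →
      Matrix.trace (eMat q y x xs φ k)
        = (2 ^ (k - 1) : R) - ((1 - (q : ℂ) ^ 2) ^ k) • y) ∧
    Matrix.trace (eMat q y x xs φ n)
      = (2 ^ (n - 1) : R) - ((1 - (q : ℂ) ^ 2) ^ n) • y := by
  exact ⟨fun _ hk _ => trace_eMat_of_one_le q y x xs φ hφy hk,
    trace_eMat_of_one_le q y x xs φ hφy hn⟩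

/-- the matrix trace of `e_{2k}` is `2^{k-1} - (1-q²)^k y` for `k ≥ 1`;
in particular (taking `k = n` and passing to the quotient, where `y` becomes `t`)
`Tr(G_{2n}) = 2^{n-1} - (1-q²)^n t`. -/
theorem eMat_trace {R : Type*} [Ring R] [Algebra ℂ R]
    (q : ℝ) (hq0 : 0 < q) (hq1 : q < 1) (n : ℕ) (hn : 1 ≤ n)
    (y : R) (x xs : ℕ → R) (φ : R →ₐ[ℂ] R)
    (hφx : ∀ i, φ (x i) = ((q : ℂ) ^ 2) • x i)
    (hφxs : ∀ i, φ (xs i) = ((q : ℂ) ^ 2) • xs i)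
    (hφy : φ y = ((q : ℂ) ^ 2) • y) :
    (∀ k, 1 ≤ k → k ≤ n →
      Matrix.trace (eMat q y x xs φ k)
        = (2 ^ (k - 1) : R) - ((1 - (q : ℂ) ^ 2) ^ k) • y) ∧
    Matrix.trace (eMat q y x xs φ n)
      = (2 ^ (n - 1) : R) - ((1 - (q : ℂ) ^ 2) ^ n) • y :=
  eMat_trace_general q n hn y x xs φ hφy
end

section
/- Let 0 < q < 1 and define the q-Pochhammer symbol (α;q)_s = Π_{j=1}^s (1 - q^{j-1}α). In any representation φ of Pol(Σ_q^{2n}) with a unit vector ψ satisfying φ(t)ψ = ψ and φ(a_i)ψ = 0 for all i, the vectors ψ^m = C^m φ(a_1^{*m_1}···a_n^{*m_n})ψ with C^m = q^{-(Σ_i m_i)² + Σ_i m_i(m_i+1)/2} Π_i (q²;q²)_{m_i}^{-1/2} satisfy ‖φ(a_i*)ψ^m‖² = q^{2Σ_{j≤i} m_j} q^{4Σ_{j>i} m_j}(1 - q^{2(m_i+1)})‖ψ^m‖², and hence ψ^m ≠ 0 for every multi-index m ∈ ℕⁿ. -/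
open Finset

/-- The q-Pochhammer symbol `(α;q)_s = ∏_{j=1}^s (1 - q^{j-1} α)`. -/
noncomputable def qPoch (α q : ℝ) (s : ℕ) : ℝ :=
  ∏ j ∈ Finset.range s, (1 - q ^ j * α)

/-- The normalization constant
`C^m = q^{-(∑ m_i)² + ∑ m_i(m_i+1)/2} ∏_i (q²;q²)_{m_i}^{-1/2}`. -/
noncomputable def cConst (q : ℝ) {n : ℕ} (m : Fin n → ℕ) : ℝ :=
  q ^ (-((∑ i, (m i : ℤ)) ^ 2) + ∑ i, (m i : ℤ) * ((m i : ℤ) + 1) / 2) *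
    (∏ i, Real.sqrt (qPoch (q ^ 2) (q ^ 2) (m i)))⁻¹

/-- The vector `ψ^m = C^m φ(a_1^{*m_1} ⋯ a_n^{*m_n}) ψ`. -/
noncomputable def psiVec {H : Type*} [NormedAddCommGroup H] [InnerProductSpace ℂ H]
    [CompleteSpace H] (q : ℝ) {n : ℕ} (a : Fin n → H →L[ℂ] H) (ψ : H)
    (m : Fin n → ℕ) : H :=
  ((cConst q m : ℝ) : ℂ) •
    (List.ofFn fun j : Fin n => (ContinuousLinearMap.adjoint (a j)) ^ (m j)).prod ψ

/-! The vectors `ψ^m` are joint eigenvectors of `t` and of all the operators `a_j^* a_j`. Write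
`x_k = a_k^{*m_k} ⋯ a_{n-1}^{*m_{n-1}} ψ` for the suffixes of the product. Since `t` and `a_j`
(`j < k`) commute with every `a_l^*` (`l ≥ k`) up to a power of `q`, we get
`t x_k = q^{2(m_k + ⋯ + m_{n-1})} x_k` and `a_j x_k = 0` for `j < k`. On such a vector the relation
for `a_k a_k^*` collapses to a two-term recursion, which gives
`a_k a_k^{*(p+1)} x = q^{2p} (1 - q^{2(p+1)}) s² a_k^{*p} x` whenever `t x = s x`.
Moving `a_j^* a_j` past `a_l^*` (`l < j`) costs only a factor `q²`, so
`q² a_j^* a_j ψ^m = (W_{j+1} - W_j) ψ^m` with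
`W_j = q^{2(m_0 + ⋯ + m_{j-1}) + 4(m_j + ⋯ + m_{n-1})}`. The relation for `a_i a_i^*` then
telescopes to the eigenvalue `W_{i+1} - q² W_i`, whence the norm formula, and the nonzero
coefficients in the recursion show inductively that no `x_k` vanishes. -/

section ScalarCommutation

variable {R A : Type*} [Monoid R] [Monoid A] [MulAction R A] [IsScalarTower R A A]
  [SMulCommClass R A A]

theorem mul_pow_eq_smul_of_mul_eq_smul {X Y : A} {c : R} (h : X * Y = c • (Y * X)) (p : ℕ) :
    X * Y ^ p = c ^ p • (Y ^ p * X) := by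
  induction p with
  | zero => simp
  | succ p ih =>
    calc X * Y ^ (p + 1) = X * Y * Y ^ p := by rw [pow_succ', mul_assoc]
      _ = c • (Y * (c ^ p • (Y ^ p * X))) := by rw [h, smul_mul_assoc, mul_assoc, ih]
      _ = c ^ (p + 1) • (Y ^ (p + 1) * X) := by
        rw [mul_smul_comm, smul_smul, ← pow_succ', ← mul_assoc, ← pow_succ']

end ScalarCommutation

namespace ContinuousLinearMap

variable {𝕜 E : Type*} [NontriviallyNormedField 𝕜] [NormedAddCommGroup E] [NormedSpace 𝕜 E]

theorem apply_pow_apply_of_mul_eq_smul {X Y : E →L[𝕜] E} {c μ : 𝕜} {y : E}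
    (h : X * Y = c • (Y * X)) (hy : X y = μ • y) (p : ℕ) :
    X ((Y ^ p) y) = (c ^ p * μ) • (Y ^ p) y := by
  rw [← mul_apply_eq_comp, mul_pow_eq_smul_of_mul_eq_smul h, smul_apply, mul_apply_eq_comp, hy,
    map_smul, smul_smul]

variable {H : Type*} [NormedAddCommGroup H] [InnerProductSpace ℂ H] [CompleteSpace H]

theorem norm_adjoint_apply_sq_of_apply_adjoint_apply {T : H →L[ℂ] H} {v : H} {μ : ℝ}
    (h : T (adjoint T v) = (μ : ℂ) • v) : ‖adjoint T v‖ ^ 2 = μ * ‖v‖ ^ 2 := by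
  rw [← inner_self_eq_norm_sq (𝕜 := ℂ), adjoint_inner_left, h, inner_smul_right,
    ← inner_self_eq_norm_sq (𝕜 := ℂ)]
  simp

end ContinuousLinearMap

theorem qPoch_pos {α q : ℝ} (hα : α < 1) (hq0 : 0 ≤ q) (hq1 : q ≤ 1) (s : ℕ) :
    0 < qPoch α q s := by
  refine prod_pos fun j _ => sub_pos.2 ?_
  rcases le_or_gt 0 α with h | h
  · calc q ^ j * α ≤ 1 * α := by gcongr; exact pow_le_one₀ hq0 hq1
      _ < 1 := by linarith
  · nlinarith [pow_nonneg hq0 j]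

theorem cConst_ne_zero {q : ℝ} (hq : q ≠ 0) (hq1 : q ^ 2 < 1) {n : ℕ} (m : Fin n → ℕ) :
    cConst q m ≠ 0 :=
  mul_ne_zero (zpow_ne_zero _ hq) (inv_ne_zero (prod_ne_zero_iff.2 fun _ _ =>
    Real.sqrt_ne_zero'.2 (qPoch_pos hq1 (sq_nonneg q) hq1.le _)))

namespace QuantumSphere

open ContinuousLinearMap

variable {H : Type*} [NormedAddCommGroup H] [InnerProductSpace ℂ H] [CompleteSpace H] {n : ℕ}

structure Relations (q : ℝ) (a : Fin n → H →L[ℂ] H) (t : H →L[ℂ] H) : Prop where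
  adjoint_t : adjoint t = t
  a_mul_t : ∀ i, a i * t = (q : ℂ) ^ 2 • (t * a i)
  a_mul_a : ∀ i j, i < j → a i * a j = (q : ℂ)⁻¹ • (a j * a i)
  a_mul_adjoint : ∀ i j, i < j → a i * adjoint (a j) = (q : ℂ) ^ 3 • (adjoint (a j) * a i)
  a_mul_adjoint_self : ∀ i, a i * adjoint (a i)
    = (q : ℂ) ^ 2 • (adjoint (a i) * a i)
      + ((q : ℂ) ^ 2 * (1 - (q : ℂ) ^ 2)) • ∑ ℓ ∈ univ.filter (· < i), adjoint (a ℓ) * a ℓ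
      + (1 - (q : ℂ) ^ 2) • (t * t)

noncomputable def suffixVec (a : Fin n → H →L[ℂ] H) (m : Fin n → ℕ) (ψ : H) (k : ℕ) : H :=
  ((List.ofFn fun j : Fin n => adjoint (a j) ^ m j).drop k).prod ψ

noncomputable def weight (q : ℝ) (m : Fin n → ℕ) (k j : ℕ) : ℂ :=
  (q : ℂ) ^ (2 * ∑ l ∈ Ico k j, Function.extend Fin.val m 0 l
    + 4 * ∑ l ∈ Ico j n, Function.extend Fin.val m 0 l)

variable {q : ℝ} {a : Fin n → H →L[ℂ] H} {t : H →L[ℂ] H} {ψ : H}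

theorem suffixVec_self (m : Fin n → ℕ) : suffixVec a m ψ n = ψ := by
  rw [suffixVec, List.drop_of_length_le (by simp), List.prod_nil, one_apply_eq_self]

theorem suffixVec_of_lt (m : Fin n → ℕ) {k : ℕ} (hk : k < n) :
    suffixVec a m ψ k = (adjoint (a ⟨k, hk⟩) ^ m ⟨k, hk⟩) (suffixVec a m ψ (k + 1)) := by
  rw [suffixVec, List.drop_eq_getElem_cons (by simpa), List.prod_cons, mul_apply_eq_comp,
    List.getElem_ofFn]
  rfl

theorem sum_Ico_extend_eq_add {m : Fin n → ℕ} {k j : ℕ} (hkj : k < j) (hk : k < n) :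
    ∑ l ∈ Ico k j, Function.extend Fin.val m 0 l
      = m ⟨k, hk⟩ + ∑ l ∈ Ico (k + 1) j, Function.extend Fin.val m 0 l := by
  rw [sum_eq_sum_Ico_succ_bot hkj, ← Fin.val_injective.extend_apply m 0 ⟨k, hk⟩]

theorem weight_of_lt (q : ℝ) (m : Fin n → ℕ) {k j : ℕ} (hkj : k < j) (hk : k < n) :
    weight q m k j = (q : ℂ) ^ (2 * m ⟨k, hk⟩) * weight q m (k + 1) j := by
  rw [weight, weight, sum_Ico_extend_eq_add hkj hk]
  ring

theorem weight_succ_sub (q : ℝ) (m : Fin n → ℕ) (i : Fin n) :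
    weight q m 0 (i + 1) - (q : ℂ) ^ 2 * weight q m 0 i
      = ((q ^ (2 * ∑ j ∈ univ.filter (· ≤ i), m j) * q ^ (4 * ∑ j ∈ univ.filter (i < ·), m j)
          * (1 - q ^ (2 * (m i + 1))) : ℝ) : ℂ) := by
  have hmap (s : Finset (Fin n)) :
      ∑ l ∈ s.map Fin.valEmbedding, Function.extend Fin.val m 0 l = ∑ j ∈ s, m j := by
    rw [sum_map]
    exact sum_congr rfl fun j _ => Fin.val_injective.extend_apply m 0 j
  have hle : ∑ l ∈ Ico 0 ((i : ℕ) + 1), Function.extend Fin.val m 0 l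
      = ∑ j ∈ univ.filter (· ≤ i), m j := by
    rw [filter_ge_eq_Iic, ← hmap, Fin.map_valEmbedding_Iic, ← Nat.range_succ_eq_Iic,
      Nat.Ico_zero_eq_range]
  have hgt : ∑ l ∈ Ico ((i : ℕ) + 1) n, Function.extend Fin.val m 0 l
      = ∑ j ∈ univ.filter (i < ·), m j := by
    rw [filter_lt_eq_Ioi, ← hmap, Fin.map_valEmbedding_Ioi, Finset.Ico_add_one_left_eq_Ioo]
  rw [← hle, ← hgt, weight, weight, sum_Ico_succ_top (Nat.zero_le _),
    Fin.val_injective.extend_apply, sum_Ico_extend_eq_add i.isLt i.isLt, Fin.eta]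
  push_cast
  ring

namespace Relations

theorem t_mul_adjoint (hR : Relations q a t) (j : Fin n) :
    t * adjoint (a j) = (q : ℂ) ^ 2 • (adjoint (a j) * t) := by
  simpa [star_mul, star_smul, star_eq_adjoint, hR.adjoint_t] using congrArg star (hR.a_mul_t j)

theorem a_mul_adjoint_of_ne (hR : Relations q a t) {i j : Fin n} (hij : i ≠ j) :
    a i * adjoint (a j) = (q : ℂ) ^ 3 • (adjoint (a j) * a i) := by
  rcases hij.lt_or_gt with hij | hji
  · exact hR.a_mul_adjoint i j hij
  · simpa [star_mul, star_smul, star_eq_adjoint] using congrArg star (hR.a_mul_adjoint j i hji)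

theorem adjoint_mul_adjoint_of_lt (hR : Relations q a t) {i j : Fin n} (hji : j < i) :
    adjoint (a i) * adjoint (a j) = (q : ℂ)⁻¹ • (adjoint (a j) * adjoint (a i)) := by
  simpa [star_mul, star_smul, star_eq_adjoint] using congrArg star (hR.a_mul_a j i hji)

theorem adjoint_mul_self_mul_adjoint_of_lt (hR : Relations q a t) (hq : q ≠ 0)
    {i j : Fin n} (hji : j < i) :
    adjoint (a i) * a i * adjoint (a j)
      = (q : ℂ) ^ 2 • (adjoint (a j) * (adjoint (a i) * a i)) := by
  have hq' : (q : ℂ) ≠ 0 := by exact_mod_cast hq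
  rw [mul_assoc, hR.a_mul_adjoint_of_ne hji.ne', mul_smul_comm, ← mul_assoc,
    hR.adjoint_mul_adjoint_of_lt hji, smul_mul_assoc, smul_smul, mul_assoc, pow_succ,
    mul_inv_cancel_right₀ hq']

theorem a_apply_adjoint_apply (hR : Relations q a t) (i : Fin n) (y : H) :
    a i (adjoint (a i) y)
      = (q : ℂ) ^ 2 • adjoint (a i) (a i y)
        + ((q : ℂ) ^ 2 * (1 - (q : ℂ) ^ 2)) • ∑ ℓ ∈ univ.filter (· < i), adjoint (a ℓ) (a ℓ y)
        + (1 - (q : ℂ) ^ 2) • t (t y) := by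
  simpa using congrArg (fun T => T y) (hR.a_mul_adjoint_self i)

theorem a_apply_adjoint_pow_succ_apply (hR : Relations q a t) {k : Fin n} {x : H} {s : ℂ}
    (hx : ∀ ℓ ≤ k, a ℓ x = 0) (htx : t x = s • x) (p : ℕ) :
    a k ((adjoint (a k) ^ (p + 1)) x)
      = ((q : ℂ) ^ (2 * p) * (1 - (q : ℂ) ^ (2 * (p + 1))) * s ^ 2) • (adjoint (a k) ^ p) x := by
  have hlow : ∀ ℓ < k, ∀ r, a ℓ ((adjoint (a k) ^ r) x) = 0 := fun ℓ hℓ r => by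
    rw [← mul_apply_eq_comp, mul_pow_eq_smul_of_mul_eq_smul (hR.a_mul_adjoint_of_ne hℓ.ne),
      smul_apply, mul_apply_eq_comp, hx ℓ hℓ.le, map_zero, smul_zero]
  have htt : ∀ r, t (t ((adjoint (a k) ^ r) x))
      = ((q : ℂ) ^ (4 * r) * s ^ 2) • (adjoint (a k) ^ r) x := by
    intro r
    rw [apply_pow_apply_of_mul_eq_smul (hR.t_mul_adjoint k) htx, map_smul,
      apply_pow_apply_of_mul_eq_smul (hR.t_mul_adjoint k) htx, smul_smul]
    congr 1
    ring
  have hstep : ∀ r, a k ((adjoint (a k) ^ (r + 1)) x)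
      = (q : ℂ) ^ 2 • adjoint (a k) (a k ((adjoint (a k) ^ r) x))
        + ((1 - (q : ℂ) ^ 2) * ((q : ℂ) ^ (4 * r) * s ^ 2)) • (adjoint (a k) ^ r) x := by
    intro r
    rw [pow_succ', mul_apply_eq_comp, hR.a_apply_adjoint_apply,
      sum_eq_zero fun ℓ hℓ => by rw [hlow ℓ (by simpa using hℓ), map_zero], smul_zero, add_zero,
      htt, smul_smul]
  induction p with
  | zero =>
    rw [hstep, pow_zero, one_apply_eq_self, hx k le_rfl, map_zero, smul_zero, zero_add]
    congr 1
    ring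
  | succ p ih =>
    rw [hstep, ih, map_smul, ← mul_apply_eq_comp, ← pow_succ', smul_smul, ← add_smul]
    congr 1
    ring

theorem t_apply_suffixVec (hR : Relations q a t) (htψ : t ψ = ψ) (m : Fin n → ℕ)
    {k : ℕ} (hk : k ≤ n) :
    t (suffixVec a m ψ k)
      = (q : ℂ) ^ (2 * ∑ l ∈ Ico k n, Function.extend Fin.val m 0 l) • suffixVec a m ψ k := by
  induction hk using Nat.decreasingInduction with
  | self => simp [suffixVec_self, htψ]
  | of_succ k hk ih =>
    rw [suffixVec_of_lt m hk, apply_pow_apply_of_mul_eq_smul (hR.t_mul_adjoint _) ih,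
      sum_Ico_extend_eq_add hk hk]
    congr 1
    ring

theorem a_apply_suffixVec_of_lt (hR : Relations q a t) (haψ : ∀ i, a i ψ = 0)
    (m : Fin n → ℕ) {k : ℕ} (hk : k ≤ n) {i : Fin n} (hik : (i : ℕ) < k) :
    a i (suffixVec a m ψ k) = 0 := by
  induction hk using Nat.decreasingInduction generalizing i with
  | self => rw [suffixVec_self, haψ]
  | of_succ k hk ih =>
    have hne : i ≠ ⟨k, hk⟩ := by
      rintro rfl
      exact lt_irrefl k hik
    rw [suffixVec_of_lt m hk, apply_pow_apply_of_mul_eq_smul (hR.a_mul_adjoint_of_ne hne)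
      (by rw [ih (by omega), zero_smul] : a i _ = (0 : ℂ) • _), mul_zero, zero_smul]

theorem adjoint_a_apply_suffixVec (hR : Relations q a t) (hq : q ≠ 0) (htψ : t ψ = ψ)
    (haψ : ∀ i, a i ψ = 0) (m : Fin n → ℕ) {k : ℕ} (hk : k ≤ n) {i : Fin n} (hki : k ≤ i) :
    (q : ℂ) ^ 2 • adjoint (a i) (a i (suffixVec a m ψ k))
      = (weight q m k (i + 1) - weight q m k i) • suffixVec a m ψ k := by
  induction hk using Nat.decreasingInduction generalizing i with
  | self => exact absurd i.isLt (by omega)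
  | of_succ k hk ih =>
    rcases hki.eq_or_lt with hik | hki
    · obtain rfl : i = ⟨k, hk⟩ := Fin.ext hik.symm
      have hW : weight q m k (k + 1) - weight q m k k
          = (q : ℂ) ^ (4 * ∑ l ∈ Ico (k + 1) n, Function.extend Fin.val m 0 l)
            * ((q : ℂ) ^ (2 * m ⟨k, hk⟩) - (q : ℂ) ^ (4 * m ⟨k, hk⟩)) := by
        rw [weight, weight, sum_Ico_extend_eq_add (Nat.lt_succ_self k) hk,
          sum_Ico_extend_eq_add hk hk]
        simp only [Ico_self, sum_empty]
        ring
      have hx0 : ∀ ℓ ≤ (⟨k, hk⟩ : Fin n), a ℓ (suffixVec a m ψ (k + 1)) = 0 := fun ℓ hℓ =>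
        hR.a_apply_suffixVec_of_lt haψ m hk (Nat.lt_succ_of_le hℓ)
      rw [hW, suffixVec_of_lt m hk]
      cases m ⟨k, hk⟩ with
      | zero => simp [hx0 _ le_rfl]
      | succ p =>
        rw [hR.a_apply_adjoint_pow_succ_apply hx0 (hR.t_apply_suffixVec htψ m hk) p, map_smul,
          ← mul_apply_eq_comp, ← pow_succ', smul_smul]
        congr 1
        ring
    · have hX : ((q : ℂ) ^ 2 • (adjoint (a i) * a i)) * adjoint (a ⟨k, hk⟩)
          = (q : ℂ) ^ 2 • (adjoint (a ⟨k, hk⟩) * ((q : ℂ) ^ 2 • (adjoint (a i) * a i))) := by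
        rw [smul_mul_assoc, hR.adjoint_mul_self_mul_adjoint_of_lt hq hki, mul_smul_comm]
      rw [suffixVec_of_lt m hk, weight_of_lt q m (by omega) hk, weight_of_lt q m hki hk,
        ← mul_sub, pow_mul]
      exact apply_pow_apply_of_mul_eq_smul hX (ih hki) _

theorem a_apply_adjoint_apply_suffixVec_zero (hR : Relations q a t) (hq : q ≠ 0)
    (htψ : t ψ = ψ) (haψ : ∀ i, a i ψ = 0) (m : Fin n → ℕ) (i : Fin n) :
    a i (adjoint (a i) (suffixVec a m ψ 0))
      = (weight q m 0 (i + 1) - (q : ℂ) ^ 2 * weight q m 0 i) • suffixVec a m ψ 0 := by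
  set W := weight q m 0
  have hN : ∀ ℓ : Fin n, (q : ℂ) ^ 2 • adjoint (a ℓ) (a ℓ (suffixVec a m ψ 0))
      = (W (ℓ + 1) - W ℓ) • suffixVec a m ψ 0 :=
    fun ℓ => hR.adjoint_a_apply_suffixVec hq htψ haψ m (Nat.zero_le n) (Nat.zero_le ℓ)
  have htt : t (t (suffixVec a m ψ 0)) = W 0 • suffixVec a m ψ 0 := by
    rw [hR.t_apply_suffixVec htψ m (Nat.zero_le n), map_smul,
      hR.t_apply_suffixVec htψ m (Nat.zero_le n), smul_smul]
    simp only [W, weight, Ico_self, sum_empty]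
    congr 1
    ring
  have hsum : ∑ ℓ ∈ univ.filter (· < i), (W (ℓ + 1) - W ℓ) = W i - W 0 := calc
    _ = ∑ l ∈ (Iio i).map Fin.valEmbedding, (W (l + 1) - W l) := by
      rw [sum_map, filter_gt_eq_Iio]
      rfl
    _ = W i - W 0 := by rw [Fin.map_valEmbedding_Iio, Nat.Iio_eq_range, sum_range_sub]
  rw [hR.a_apply_adjoint_apply, hN, htt, mul_comm, ← smul_smul, smul_sum]
  simp only [hN]
  rw [← sum_smul, hsum, smul_smul, smul_smul, ← add_smul, ← add_smul]
  congr 1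
  ring

theorem suffixVec_ne_zero (hR : Relations q a t) (hq0 : 0 < q) (hq1 : q < 1) (hψ : ψ ≠ 0)
    (htψ : t ψ = ψ) (haψ : ∀ i, a i ψ = 0) (m : Fin n → ℕ) {k : ℕ} (hk : k ≤ n) :
    suffixVec a m ψ k ≠ 0 := by
  induction hk using Nat.decreasingInduction with
  | self => rwa [suffixVec_self]
  | of_succ k hk ih =>
    have hx0 : ∀ ℓ ≤ (⟨k, hk⟩ : Fin n), a ℓ (suffixVec a m ψ (k + 1)) = 0 := fun ℓ hℓ =>
      hR.a_apply_suffixVec_of_lt haψ m hk (Nat.lt_succ_of_le hℓ)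
    have hq : (q : ℂ) ≠ 0 := by exact_mod_cast hq0.ne'
    rw [suffixVec_of_lt m hk]
    induction m ⟨k, hk⟩ with
    | zero => rwa [pow_zero, one_apply_eq_self]
    | succ p ihp =>
      intro h
      have hc : (q : ℂ) ^ (2 * (p + 1)) ≠ 1 := by
        exact_mod_cast (pow_lt_one₀ hq0.le hq1 (by omega)).ne
      have := hR.a_apply_adjoint_pow_succ_apply hx0 (hR.t_apply_suffixVec htψ m hk) p
      rw [h, map_zero] at this
      exact smul_ne_zero (by simp [hq, sub_eq_zero, hc.symm]) ihp this.symm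

end Relations

end QuantumSphere

theorem quantum_sphere_representation_vectors_general {H : Type*} [NormedAddCommGroup H]
    [InnerProductSpace ℂ H] [CompleteSpace H] (n : ℕ)
    (q : ℝ) (hq0 : 0 < q) (hq1 : q < 1)
    (a : Fin n → H →L[ℂ] H) (t : H →L[ℂ] H)
    (hts : ContinuousLinearMap.adjoint t = t)
    (r1 : ∀ i, a i * t = ((q : ℂ) ^ 2) • (t * a i))
    (r2 : ∀ i j, i < j → a i * a j = ((q : ℂ))⁻¹ • (a j * a i))
    (r3 : ∀ i j, i < j →
      a i * ContinuousLinearMap.adjoint (a j)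
        = ((q : ℂ) ^ 3) • (ContinuousLinearMap.adjoint (a j) * a i))
    (r4 : ∀ i, a i * ContinuousLinearMap.adjoint (a i)
        = ((q : ℂ) ^ 2) • (ContinuousLinearMap.adjoint (a i) * a i)
          + ((q : ℂ) ^ 2 * (1 - (q : ℂ) ^ 2)) •
              ∑ ℓ ∈ univ.filter (· < i),
                ContinuousLinearMap.adjoint (a ℓ) * a ℓ
          + (1 - (q : ℂ) ^ 2) • (t * t))
    (ψ : H) (hψ : ‖ψ‖ = 1) (htψ : t ψ = ψ) (haψ : ∀ i, a i ψ = 0) :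
    (∀ (m : Fin n → ℕ) (i : Fin n),
      ‖ContinuousLinearMap.adjoint (a i) (psiVec q a ψ m)‖ ^ 2
        = q ^ (2 * ∑ j ∈ univ.filter (· ≤ i), m j) *
            q ^ (4 * ∑ j ∈ univ.filter (i < ·), m j) *
            (1 - q ^ (2 * (m i + 1))) * ‖psiVec q a ψ m‖ ^ 2) ∧
    ∀ m : Fin n → ℕ, psiVec q a ψ m ≠ 0 := by
  have hR : QuantumSphere.Relations q a t := ⟨hts, r1, r2, r3, r4⟩
  have hv : ∀ m, psiVec q a ψ m = ((cConst q m : ℝ) : ℂ) • QuantumSphere.suffixVec a m ψ 0 :=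
    fun _ => rfl
  refine ⟨fun m i => ?_, fun m => ?_⟩
  · have h := hR.a_apply_adjoint_apply_suffixVec_zero hq0.ne' htψ haψ m i
    rw [QuantumSphere.weight_succ_sub] at h
    rw [hv, map_smul, norm_smul, norm_smul, mul_pow, mul_pow,
      ContinuousLinearMap.norm_adjoint_apply_sq_of_apply_adjoint_apply h]
    ring
  · have hψ0 : ψ ≠ 0 := norm_ne_zero_iff.1 (hψ ▸ one_ne_zero)
    rw [hv]
    exact smul_ne_zero (by exact_mod_cast cConst_ne_zero hq0.ne' (by nlinarith) m)
      (hR.suffixVec_ne_zero hq0 hq1 hψ0 htψ haψ m (Nat.zero_le n))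

/-- in any `*`-representation of `Pol(Σ_q^{2n})` (given by bounded
operators `a_i`, `t` satisfying the defining relations) with a unit vector `ψ`
satisfying `t ψ = ψ` and `a_i ψ = 0`, the vectors `ψ^m` satisfy
`‖a_i* ψ^m‖² = q^{2∑_{j≤i} m_j} q^{4∑_{j>i} m_j} (1 - q^{2(m_i+1)}) ‖ψ^m‖²`,
and hence `ψ^m ≠ 0` for every multi-index `m ∈ ℕⁿ`. -/
theorem quantum_sphere_representation_vectors {H : Type*} [NormedAddCommGroup H]
    [InnerProductSpace ℂ H] [CompleteSpace H] (n : ℕ)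
    (q : ℝ) (hq0 : 0 < q) (hq1 : q < 1)
    (a : Fin n → H →L[ℂ] H) (t : H →L[ℂ] H)
    (hts : ContinuousLinearMap.adjoint t = t)
    (r1 : ∀ i, a i * t = ((q : ℂ) ^ 2) • (t * a i))
    (r2 : ∀ i j, i < j → a i * a j = ((q : ℂ))⁻¹ • (a j * a i))
    (r3 : ∀ i j, i < j →
      a i * ContinuousLinearMap.adjoint (a j)
        = ((q : ℂ) ^ 3) • (ContinuousLinearMap.adjoint (a j) * a i))
    (r4 : ∀ i, a i * ContinuousLinearMap.adjoint (a i)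
        = ((q : ℂ) ^ 2) • (ContinuousLinearMap.adjoint (a i) * a i)
          + ((q : ℂ) ^ 2 * (1 - (q : ℂ) ^ 2)) •
              ∑ ℓ ∈ univ.filter (· < i),
                ContinuousLinearMap.adjoint (a ℓ) * a ℓ
          + (1 - (q : ℂ) ^ 2) • (t * t))
    (r5 : ((q : ℂ) ^ 2) •
        (∑ i, ContinuousLinearMap.adjoint (a i) * a i) = t - t * t)
    (ψ : H) (hψ : ‖ψ‖ = 1) (htψ : t ψ = ψ) (haψ : ∀ i, a i ψ = 0) :
    (∀ (m : Fin n → ℕ) (i : Fin n),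
      ‖ContinuousLinearMap.adjoint (a i) (psiVec q a ψ m)‖ ^ 2
        = q ^ (2 * ∑ j ∈ univ.filter (· ≤ i), m j) *
            q ^ (4 * ∑ j ∈ univ.filter (i < ·), m j) *
            (1 - q ^ (2 * (m i + 1))) * ‖psiVec q a ψ m‖ ^ 2) ∧
    ∀ m : Fin n → ℕ, psiVec q a ψ m ≠ 0 :=
  quantum_sphere_representation_vectors_general n q hq0 hq1 a t hts r1 r2 r3 r4 ψ hψ htψ haψ
end
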